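/- For every n ≥ 1, the number of Ulam words of length n of the form 0^a 1 0^b (exactly one 1) equals G(n-1), where G is Gould's sequence. -/

import Mathlib

/-- Ulam words with fuel bounding the recursion depth (fuel ≥ length suffices). -/
def UlamN : ℕ → List Bool → Prop
  | 0, _ => False
  | n + 1, w =>
    w = [false] ∨ w = [true] ∨
      ∃! p : List Bool × List Bool,
        p.1 ≠ [] ∧ p.2 ≠ [] ∧ UlamN n p.1 ∧ UlamN n p.2 ∧ p.1 ≠ p.2 ∧ p.1 ++ p.2 = w

/-- A word over {0,1} (`false` = 0, `true` = 1) is Ulam. -/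
def IsUlam (w : List Bool) : Prop := UlamN w.length w

/-- The integer whose binary representation (most significant digit first) is `w`. -/
def binVal (w : List Bool) : ℕ := w.foldl (fun acc b => 2 * acc + b.toNat) 0

/-!
In a word `0^a 1 0^b` of length at least two, the piece of a split into Ulam words that misses the
letter `1` is an all-zero Ulam word, hence the word `0`. So the only candidate splits are
`0 · 0^(a-1) 1 0^b` and `0^a 1 0^(b-1) · 0`, and `0^a 1 0^b` is Ulam iff exactly one of the two
shorter words is: this is Pascal's rule modulo 2, so `0^a 1 0^b` is Ulam iff `choose (a + b) a` is
odd. By Lucas' theorem the number of odd entries in row `m` of Pascal's triangle doubles with each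
binary digit `1` of `m` (Glaisher), giving `2 ^ s(m)` with `m = n - 1`.
-/

open Finset

def IsSplit (P : List Bool → Prop) (w : List Bool) (p : List Bool × List Bool) : Prop :=
  p.1 ≠ [] ∧ p.2 ≠ [] ∧ P p.1 ∧ P p.2 ∧ p.1 ≠ p.2 ∧ p.1 ++ p.2 = w

theorem isSplit_congr {P Q : List Bool → Prop} {w : List Bool} (p : List Bool × List Bool)
    (h : ∀ u : List Bool, u.length < w.length → (P u ↔ Q u)) :
    IsSplit P w p ↔ IsSplit Q w p := by
  constructor <;> rintro ⟨h1, h2, u1, u2, hne, rfl⟩ <;>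
  · have l1 : p.1.length < (p.1 ++ p.2).length := by simp [List.length_pos_iff.mpr h2]
    have l2 : p.2.length < (p.1 ++ p.2).length := by simp [List.length_pos_iff.mpr h1]
    exact ⟨h1, h2, by simpa [h _ l1] using u1, by simpa [h _ l2] using u2, hne, rfl⟩

theorem ulamN_succ {n : ℕ} {w : List Bool} :
    UlamN (n + 1) w ↔ w = [false] ∨ w = [true] ∨ ∃! p, IsSplit (UlamN n) w p :=
  Iff.rfl

theorem not_ulamN_nil (n : ℕ) : ¬UlamN n [] := by
  cases n with
  | zero => exact id
  | succ n => rintro (h | h | ⟨p, ⟨h1, -, -, -, -, h⟩, -⟩) <;> simp_all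

theorem ulamN_succ_iff_of_length_le {n : ℕ} {w : List Bool} (hw : w.length ≤ n) :
    UlamN (n + 1) w ↔ UlamN n w := by
  induction n generalizing w with
  | zero =>
    rw [List.length_eq_zero_iff.mp (Nat.le_zero.mp hw)]
    exact iff_of_false (not_ulamN_nil _) (not_ulamN_nil _)
  | succ n ih =>
    rw [ulamN_succ, ulamN_succ]
    exact or_congr_right <| or_congr_right <| existsUnique_congr fun p =>
      isSplit_congr p fun u hu => ih (by omega)

theorem ulamN_iff_isUlam {n : ℕ} {w : List Bool} (hw : w.length ≤ n) : UlamN n w ↔ IsUlam w := by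
  induction n, hw using Nat.le_induction with
  | base => rfl
  | succ n hn ih => rw [ulamN_succ_iff_of_length_le hn, ih]

theorem isUlam_iff_existsUnique_isSplit {w : List Bool} (hw : 2 ≤ w.length) :
    IsUlam w ↔ ∃! p, IsSplit IsUlam w p := by
  obtain ⟨n, hn⟩ : ∃ n, w.length = n + 1 := ⟨w.length - 1, by omega⟩
  have h0 : w ≠ [false] := by rintro rfl; simp at hw
  have h1 : w ≠ [true] := by rintro rfl; simp at hw
  rw [IsUlam, hn, ulamN_succ, or_iff_right h0, or_iff_right h1]
  exact existsUnique_congr fun p => isSplit_congr p fun u hu => ulamN_iff_isUlam (by omega)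

theorem isUlam_false : IsUlam [false] := Or.inl rfl

theorem isUlam_true : IsUlam [true] := Or.inr (Or.inl rfl)

theorem IsUlam.eq_singleton_false {u : List Bool} (hu : IsUlam u) (h : true ∉ u) :
    u = [false] := by
  induction hn : u.length using Nat.strong_induction_on generalizing u with
  | _ n ih =>
  subst hn
  rcases Nat.lt_or_ge u.length 2 with hu2 | hu2
  · match u, hu2 with
    | [], _ => exact absurd hu (not_ulamN_nil 0)
    | [false], _ => rfl
    | [true], _ => simp at h
  · obtain ⟨p, ⟨h1, h2, u1, u2, hne, rfl⟩, -⟩ := (isUlam_iff_existsUnique_isSplit hu2).mp hu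
    simp only [List.mem_append, not_or] at h
    have l1 := List.length_pos_iff.mpr h1
    have l2 := List.length_pos_iff.mpr h2
    have e1 := ih _ (by simp; omega) u1 h.1 rfl
    have e2 := ih _ (by simp; omega) u2 h.2 rfl
    exact absurd (e1.trans e2.symm) hne

def singleOne (a b : ℕ) : List Bool := List.replicate a false ++ true :: List.replicate b false

@[simp] theorem singleOne_zero_left (b : ℕ) : singleOne 0 b = true :: List.replicate b false := rfl

@[simp] theorem singleOne_succ_left (a b : ℕ) : singleOne (a + 1) b = false :: singleOne a b := rfl

theorem singleOne_succ_right (a b : ℕ) : singleOne a (b + 1) = singleOne a b ++ [false] := by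
  simp [singleOne, List.replicate_succ']

@[simp] theorem length_singleOne (a b : ℕ) : (singleOne a b).length = a + b + 1 := by
  simp [singleOne]; omega

@[simp] theorem count_true_singleOne (a b : ℕ) : (singleOne a b).count true = 1 := by
  simp [singleOne, List.count_replicate]

theorem singleOne_ne_singleton_false (a b : ℕ) : singleOne a b ≠ [false] := by
  intro h
  simpa [h] using count_true_singleOne a b

theorem singleOne_inj {a b a' b' : ℕ} : singleOne a b = singleOne a' b' ↔ a = a' ∧ b = b' := by
  induction a generalizing a' with
  | zero => cases a' <;> simp [List.replicate_inj]
  | succ a ih => cases a' <;> simp [ih]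

theorem count_true_eq_one_iff {w : List Bool} : w.count true = 1 ↔ ∃ a b, w = singleOne a b := by
  refine ⟨fun h => ?_, by rintro ⟨a, b, rfl⟩; simp⟩
  induction w with
  | nil => simp at h
  | cons x w ih =>
    cases x
    · obtain ⟨a, b, rfl⟩ := ih (by simpa using h)
      exact ⟨a + 1, b, rfl⟩
    · refine ⟨0, w.length, ?_⟩
      simpa [List.eq_replicate_iff, List.count_eq_zero] using h

theorem isSplit_singleOne_iff {a b : ℕ} {p : List Bool × List Bool} :
    IsSplit IsUlam (singleOne a b) p ↔
      (0 < a ∧ IsUlam (singleOne (a - 1) b)) ∧ p = ([false], singleOne (a - 1) b) ∨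
      (0 < b ∧ IsUlam (singleOne a (b - 1))) ∧ p = (singleOne a (b - 1), [false]) := by
  constructor
  · obtain ⟨p1, p2⟩ := p
    rintro ⟨-, -, u1, u2, -, h⟩
    dsimp only at u1 u2 h
    have hcount : p1.count true + p2.count true = 1 := by
      rw [← List.count_append, h, count_true_singleOne]
    obtain rfl | rfl : p1 = [false] ∨ p2 = [false] := by
      rcases Nat.eq_zero_or_pos (p1.count true) with c | c
      · exact Or.inl (u1.eq_singleton_false (List.count_eq_zero.mp c))
      · exact Or.inr (u2.eq_singleton_false (List.count_eq_zero.mp (by omega)))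
    · cases a with
      | zero => simp at h
      | succ a =>
        obtain rfl : p2 = singleOne a b := by simpa using h
        simp [u2]
    · cases b with
      | zero => simp [singleOne] at h
      | succ b =>
        obtain rfl : p1 = singleOne a b := by simpa [singleOne_succ_right] using h
        simp [u1]
  · rintro (⟨⟨ha, hu⟩, rfl⟩ | ⟨⟨hb, hu⟩, rfl⟩)
    · obtain ⟨a, rfl⟩ := Nat.exists_eq_add_of_lt ha
      exact ⟨by simp, by simp [← List.length_pos_iff], isUlam_false, by simpa using hu,
        (singleOne_ne_singleton_false _ _).symm, by simp⟩
    · obtain ⟨b, rfl⟩ := Nat.exists_eq_add_of_lt hb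
      exact ⟨by simp [← List.length_pos_iff], by simp, by simpa using hu, isUlam_false,
        singleOne_ne_singleton_false _ _, by simp [singleOne_succ_right]⟩

theorem existsUnique_and_eq_or_and_eq_iff_xor {α : Type*} {P Q : Prop} {x y : α} (hxy : x ≠ y) :
    (∃! p, P ∧ p = x ∨ Q ∧ p = y) ↔ Xor P Q := by
  by_cases hP : P <;> by_cases hQ : Q <;> simp only [hP, hQ, true_and, false_and, or_false,
    false_or, existsUnique_eq, xor_iff_iff_not, not_true, not_false_iff, iff_true, iff_false]
  · rintro ⟨p, -, hp⟩
    exact hxy ((hp x (Or.inl rfl)).trans (hp y (Or.inr rfl)).symm)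
  · exact fun ⟨_, h, _⟩ => h

theorem isUlam_singleOne_iff_xor {a b : ℕ} (hab : a + b ≠ 0) :
    IsUlam (singleOne a b) ↔
      Xor (0 < a ∧ IsUlam (singleOne (a - 1) b)) (0 < b ∧ IsUlam (singleOne a (b - 1))) := by
  rw [isUlam_iff_existsUnique_isSplit (by simp; omega)]
  simp only [isSplit_singleOne_iff]
  exact existsUnique_and_eq_or_and_eq_iff_xor
    (by simp [Ne.symm (singleOne_ne_singleton_false _ _)])

theorem isUlam_singleOne_iff_odd_choose (a b : ℕ) :
    IsUlam (singleOne a b) ↔ Odd ((a + b).choose a) := by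
  induction a generalizing b with
  | zero =>
    induction b with
    | zero => simpa using isUlam_true
    | succ b ih => rw [isUlam_singleOne_iff_xor (by omega)]; simpa [xor_iff_iff_not] using ih
  | succ a iha =>
    induction b with
    | zero => rw [isUlam_singleOne_iff_xor (by omega)]; simpa [xor_iff_iff_not] using iha 0
    | succ b ihb =>
      rw [isUlam_singleOne_iff_xor (by omega)]
      simp only [Nat.add_sub_cancel, Nat.succ_pos, true_and]
      rw [iha, ihb, xor_iff_iff_not, Nat.not_odd_iff_even, ← Nat.odd_add,
        show a + 1 + b = a + (b + 1) by omega, ← Nat.choose_succ_succ',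
        show a + (b + 1) + 1 = a + 1 + (b + 1) by omega]

theorem choose_mod_two (n k : ℕ) :
    n.choose k % 2 = (n % 2).choose (k % 2) * ((n / 2).choose (k / 2) % 2) := by
  have hlucas := Choose.choose_modEq_choose_mod_mul_choose_div_nat (p := 2) (n := n) (k := k)
  have hle : (n % 2).choose (k % 2) < 2 := by
    rcases Nat.mod_two_eq_zero_or_one n with hn | hn <;>
      rcases Nat.mod_two_eq_zero_or_one k with hk | hk <;> simp [hn, hk]
  rw [hlucas, Nat.mul_mod, Nat.mod_eq_of_lt hle, Nat.mod_eq_of_lt (by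
    have := Nat.mod_lt ((n / 2).choose (k / 2)) two_pos; nlinarith)]

theorem sum_range_two_mul {M : Type*} [AddCommMonoid M] (f : ℕ → M) (n : ℕ) :
    ∑ i ∈ range (2 * n), f i = ∑ j ∈ range n, (f (2 * j) + f (2 * j + 1)) := by
  induction n with
  | zero => simp
  | succ n ih => simp [Nat.mul_succ, sum_range_succ, ih, add_assoc]

theorem sum_range_choose_mod_two_eq_two_pow_mul (m : ℕ) :
    ∑ k ∈ range (m + 1), m.choose k % 2 =
      2 ^ (m % 2) * ∑ j ∈ range (m / 2 + 1), (m / 2).choose j % 2 := by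
  calc ∑ k ∈ range (m + 1), m.choose k % 2
      = ∑ k ∈ range (2 * (m / 2 + 1)), m.choose k % 2 := by
        refine sum_subset (range_subset_range.mpr (by omega)) fun k _ hk => ?_
        simp [Nat.choose_eq_zero_of_lt (show m < k by simpa using hk)]
    _ = ∑ j ∈ range (m / 2 + 1),
          ((m % 2).choose 0 + (m % 2).choose 1) * ((m / 2).choose j % 2) := by
        rw [sum_range_two_mul]
        refine sum_congr rfl fun j _ => ?_
        rw [choose_mod_two m, choose_mod_two m, show 2 * j % 2 = 0 by omega,
          show 2 * j / 2 = j by omega, show (2 * j + 1) % 2 = 1 by omega,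
          show (2 * j + 1) / 2 = j by omega, add_mul]
    _ = _ := by
        rw [← mul_sum]
        rcases Nat.mod_two_eq_zero_or_one m with h | h <;> simp [h]

theorem sum_range_choose_mod_two (m : ℕ) :
    ∑ k ∈ range (m + 1), m.choose k % 2 = 2 ^ (Nat.digits 2 m).sum := by
  induction m using Nat.strong_induction_on with
  | _ m ih =>
  rcases Nat.eq_zero_or_pos m with rfl | hm
  · simp
  rw [sum_range_choose_mod_two_eq_two_pow_mul, ih (m / 2) (by omega),
    Nat.digits_def' (by norm_num) hm, List.sum_cons, pow_add]

theorem card_odd_choose (m : ℕ) :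
    #{k ∈ range (m + 1) | Odd (m.choose k)} = 2 ^ (Nat.digits 2 m).sum := by
  rw [card_filter, ← sum_range_choose_mod_two]
  refine sum_congr rfl fun k _ => ?_
  split_ifs with h <;> simp_all [Nat.odd_iff]

theorem ulam_single_one_count (n : ℕ) (hn : 1 ≤ n) :
    {w : List Bool | w.length = n ∧ IsUlam w ∧ w.count true = 1}.ncard =
      2 ^ (Nat.digits 2 (n - 1)).sum := by
  obtain ⟨m, rfl⟩ : ∃ m, n = m + 1 := ⟨n - 1, by omega⟩
  have hset : {w : List Bool | w.length = m + 1 ∧ IsUlam w ∧ w.count true = 1} =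
      ({a ∈ range (m + 1) | Odd (m.choose a)}.image fun a => singleOne a (m - a) :) := by
    ext w
    simp only [Set.mem_ofPred_eq, coe_image, coe_filter, Set.mem_image, mem_range]
    constructor
    · rintro ⟨hlen, hu, hc⟩
      obtain ⟨a, b, rfl⟩ := count_true_eq_one_iff.mp hc
      rw [length_singleOne] at hlen
      obtain rfl : b = m - a := by omega
      refine ⟨a, ⟨by omega, ?_⟩, rfl⟩
      rwa [isUlam_singleOne_iff_odd_choose, show a + (m - a) = m by omega] at hu
    · rintro ⟨a, ⟨ha, hodd⟩, rfl⟩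
      refine ⟨by rw [length_singleOne]; omega, ?_, count_true_singleOne _ _⟩
      rwa [isUlam_singleOne_iff_odd_choose, show a + (m - a) = m by omega]
  rw [hset, Set.ncard_coe_finset, card_image_of_injOn fun a _ a' _ h => (singleOne_inj.mp h).1,
    Nat.add_sub_cancel, card_odd_choose]
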